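/- Let Φ : (ℝ\{0\}) × ℝ⁺ → (ℝ\{0\}) × ℝ⁺ be given by Φ(A,B) = (24A⁷B⁻⁶ + 24A⁴B⁻³, 4A + 24A⁴B⁻³ + 4A⁻²B³). Then Φ maps each pair (A,B) with A·B > 0 to a pair (X,Y) with X·Y > 0 and sign(X) = sign(A), and Φ restricted to the set {A > 0, B > 0} is a bijection onto {X > 0, Y > 0}. -/

import Mathlib

/-!
`Φ` is homogeneous of degree one, `Φ(cA, cB) = c • Φ(A, B)`, so it is best read in the coordinates
`(A, s)` with `s = (B/A)³` the ray parameter. There `Φ = (X, X · r(s))` with `X = 24A(s+1)/s²` and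
`r(s) = s(s²+s+6)/(6(s+1)) = s²/6 + s/(s+1)`, a strictly increasing bijection of `(0, ∞)`.
Hence the slope `Y/X` of the image determines `s`, after which `X` determines `A`.
-/

open Set

noncomputable section

def rayRatio (s : ℝ) : ℝ := s * (s ^ 2 + s + 6) / (6 * (s + 1))

lemma rayRatio_eq {s : ℝ} (hs : s + 1 ≠ 0) : rayRatio s = s ^ 2 / 6 + s / (s + 1) := by
  unfold rayRatio
  field_simp

lemma strictMonoOn_rayRatio : StrictMonoOn rayRatio (Ici 0) := by
  intro s (hs : 0 ≤ s) t (ht : 0 ≤ t) hst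
  rw [rayRatio_eq (by linarith), rayRatio_eq (by linarith)]
  have hsq : s ^ 2 / 6 < t ^ 2 / 6 := by gcongr
  have hfrac : s / (s + 1) ≤ t / (t + 1) := by
    rw [div_le_div_iff₀ (by linarith) (by linarith)]
    linarith
  linarith

lemma continuousOn_rayRatio : ContinuousOn rayRatio (Ici 0) := by
  unfold rayRatio
  refine ContinuousOn.div (by fun_prop) (by fun_prop) fun s (hs : 0 ≤ s) => ?_
  positivity

lemma surjOn_rayRatio : SurjOn rayRatio (Ioi 0) (Ioi 0) := by
  intro y (hy : 0 < y)
  have hb : y ≤ rayRatio (6 * y + 1) := by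
    rw [rayRatio_eq (by linarith)]
    have : 0 ≤ (6 * y + 1) / (6 * y + 1 + 1) := by positivity
    nlinarith
  have h0 : rayRatio 0 = 0 := by simp [rayRatio]
  obtain ⟨s, ⟨hs0, -⟩, hs⟩ := intermediate_value_Icc (by linarith)
    (continuousOn_rayRatio.mono Icc_subset_Ici_self) ⟨by rw [h0]; exact hy.le, hb⟩
  refine ⟨s, lt_of_le_of_ne hs0 ?_, hs⟩
  rintro rfl
  exact hy.ne' (h0 ▸ hs).symm

lemma bijOn_rayRatio : BijOn rayRatio (Ioi 0) (Ioi 0) :=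
  ⟨fun s (hs : 0 < s) => show 0 < rayRatio s by unfold rayRatio; positivity,
    strictMonoOn_rayRatio.injOn.mono Ioi_subset_Ici_self, surjOn_rayRatio⟩

def g2LaplacianMap (p : ℝ × ℝ) : ℝ × ℝ :=
  (24 * p.1 ^ 7 * p.2 ^ (-6 : ℤ) + 24 * p.1 ^ 4 * p.2 ^ (-3 : ℤ),
    4 * p.1 + 24 * p.1 ^ 4 * p.2 ^ (-3 : ℤ) + 4 * p.1 ^ (-2 : ℤ) * p.2 ^ 3)

def rayCoords (p : ℝ × ℝ) : ℝ × ℝ := (p.1, (p.2 / p.1) ^ 3)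

def g2LaplacianInRayCoords (q : ℝ × ℝ) : ℝ × ℝ :=
  (24 * q.1 * (q.2 + 1) / q.2 ^ 2, 24 * q.1 * (q.2 + 1) / q.2 ^ 2 * rayRatio q.2)

lemma g2LaplacianMap_eqOn_comp :
    EqOn g2LaplacianMap (g2LaplacianInRayCoords ∘ rayCoords) (Ioi 0 ×ˢ Ioi 0) := by
  rintro ⟨A, B⟩ ⟨hA : 0 < A, hB : 0 < B⟩
  simp only [g2LaplacianMap, g2LaplacianInRayCoords, rayCoords, rayRatio, Function.comp_apply,
    zpow_neg, zpow_ofNat, Prod.mk.injEq]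
  constructor <;> field_simp <;> ring

lemma bijOn_rayCoords : BijOn rayCoords (Ioi 0 ×ˢ Ioi 0) (Ioi 0 ×ˢ Ioi 0) := by
  refine ⟨?_, ?_, ?_⟩
  · rintro ⟨A, B⟩ ⟨hA : 0 < A, hB : 0 < B⟩
    exact ⟨hA, show 0 < (B / A) ^ 3 by positivity⟩
  · rintro ⟨A, B⟩ ⟨hA : 0 < A, hB : 0 < B⟩ ⟨A', B'⟩ ⟨-, hB' : 0 < B'⟩ h
    obtain ⟨rfl, h⟩ : A = A' ∧ (B / A) ^ 3 = (B' / A') ^ 3 := Prod.mk.inj h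
    rw [pow_left_inj₀ (by positivity) (by positivity) three_ne_zero, div_left_inj' hA.ne'] at h
    rw [h]
  · rintro ⟨A, s⟩ ⟨hA : 0 < A, hs : 0 < s⟩
    have hcube : (s ^ (3⁻¹ : ℝ)) ^ 3 = s := by
      exact_mod_cast Real.rpow_inv_natCast_pow hs.le three_ne_zero
    refine ⟨(A, A * s ^ (3⁻¹ : ℝ)), ⟨hA, show 0 < A * s ^ (3⁻¹ : ℝ) by positivity⟩, ?_⟩
    simp only [rayCoords, mul_div_cancel_left₀ _ hA.ne', hcube]

lemma bijOn_g2LaplacianInRayCoords :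
    BijOn g2LaplacianInRayCoords (Ioi 0 ×ˢ Ioi 0) (Ioi 0 ×ˢ Ioi 0) := by
  refine ⟨?_, ?_, ?_⟩
  · rintro ⟨A, s⟩ ⟨hA : 0 < A, hs : 0 < s⟩
    have hr : 0 < rayRatio s := bijOn_rayRatio.mapsTo hs
    constructor <;> simp only [g2LaplacianInRayCoords, mem_Ioi] <;> positivity
  · rintro ⟨A, s⟩ ⟨-, hs : 0 < s⟩ ⟨A', s'⟩ ⟨hA' : 0 < A', hs' : 0 < s'⟩ h
    obtain ⟨hX, hY⟩ := Prod.mk.inj h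
    rw [hX] at hY
    obtain rfl : s = s' :=
      bijOn_rayRatio.injOn hs hs' (mul_left_cancel₀ (by positivity) hY)
    field_simp at hX
    rw [hX]
  · rintro ⟨X, Y⟩ ⟨hX : 0 < X, hY : 0 < Y⟩
    obtain ⟨s, hs : 0 < s, hrs⟩ := surjOn_rayRatio (show 0 < Y / X by positivity)
    set A := X * s ^ 2 / (24 * (s + 1)) with hA
    have hXA : 24 * A * (s + 1) / s ^ 2 = X := by rw [hA]; field_simp
    refine ⟨(A, s), ⟨show 0 < A by positivity, hs⟩, ?_⟩
    simp only [g2LaplacianInRayCoords, hXA, hrs]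
    field_simp

end

/-- The map
`Φ(A,B) = (24A⁷B⁻⁶ + 24A⁴B⁻³, 4A + 24A⁴B⁻³ + 4A⁻²B³)` sends each pair `(A,B)`
with `A ≠ 0`, `B > 0` and `A·B > 0` to a pair `(X,Y)` with `X·Y > 0` and
`sign(X) = sign(A)`, and restricted to the positive quadrant it is a bijection
onto the positive quadrant. -/
theorem stmt14 :
    (∀ A B : ℝ, A ≠ 0 → 0 < B → 0 < A * B →
      0 < (24 * A ^ 7 * B ^ (-6 : ℤ) + 24 * A ^ 4 * B ^ (-3 : ℤ)) *
          (4 * A + 24 * A ^ 4 * B ^ (-3 : ℤ) + 4 * A ^ (-2 : ℤ) * B ^ 3) ∧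
      (0 < 24 * A ^ 7 * B ^ (-6 : ℤ) + 24 * A ^ 4 * B ^ (-3 : ℤ) ↔ 0 < A)) ∧
    BijOn
      (fun p : ℝ × ℝ =>
        ((24 * p.1 ^ 7 * p.2 ^ (-6 : ℤ) + 24 * p.1 ^ 4 * p.2 ^ (-3 : ℤ)),
         (4 * p.1 + 24 * p.1 ^ 4 * p.2 ^ (-3 : ℤ) + 4 * p.1 ^ (-2 : ℤ) * p.2 ^ 3)))
      {p : ℝ × ℝ | 0 < p.1 ∧ 0 < p.2} {p : ℝ × ℝ | 0 < p.1 ∧ 0 < p.2} := by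
  have hbij : BijOn g2LaplacianMap (Ioi 0 ×ˢ Ioi 0) (Ioi 0 ×ˢ Ioi 0) :=
    (bijOn_g2LaplacianInRayCoords.comp bijOn_rayCoords).congr g2LaplacianMap_eqOn_comp.symm
  refine ⟨fun A B _ hB hAB => ?_, hbij⟩
  have hA : 0 < A := pos_of_mul_pos_left hAB hB.le
  obtain ⟨hX, hY⟩ := hbij.mapsTo (show (A, B) ∈ Ioi 0 ×ˢ Ioi 0 from ⟨hA, hB⟩)
  exact ⟨mul_pos hX hY, iff_of_true hX hA⟩
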